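/- arXiv:2311.04844 — 2 statements merged into one kernel-verified Lean document; each statement's English description precedes it below -/
import Mathlib

section
/- Let $\kappa \le 0$, $m \in \mathbb{N}$, $1 \le q \le \infty$, and $M > \frac{n}{m}|\frac{1}{q} - \frac{1}{2}| - \kappa$. Let $K$ be a singular kernel of type $(\kappa, m, q, M)$. Let $Q_0, Q_1 \subset (0,\infty) \times \mathbb{R}^n$ be bounded rectangles (products of bounded sets in time and space) such that either the time projections or the space projections are at distance at least $\epsilon > 0$ from each other. Define $\omega(t,s) := \|\mathds{1}_{Q_0}(t) K(t,s) \mathds{1}_{Q_1}(s)\|_{\mathcal{L}(L^2(\mathbb{R}^n))}$. Then $\sup_t \int_0^\infty \omega(t,s)\, ds$ and $\sup_s \int_0^\infty \omega(t,s)\, dt$ are both finite, bounded by a constant depending on $\epsilon$, $Q_0$, $Q_1$, $\kappa$, $m$, $M$, $q$. -/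
open MeasureTheory Metric Set ENNReal NNReal

noncomputable section

abbrev Spc (n : ℕ) := EuclideanSpace ℝ (Fin n)

abbrev L2 (n : ℕ) := Lp ℂ 2 (volume : Measure (Spc n))

/-- Distance between two subsets, in `ℝ≥0∞`. -/
def setEDist {α : Type*} [PseudoEMetricSpace α] (E F : Set α) : ℝ≥0∞ :=
  ⨅ x ∈ E, ⨅ y ∈ F, edist x y

/-- The indicator of a set applied to an `L²` function, as an element of `L²`. -/
def indL2 {n : ℕ} (F : Set (Spc n)) (hF : MeasurableSet F) (f : L2 n) : L2 n :=
  ((Lp.memLp f).indicator hF).toLp (F.indicator f)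

/-- `L^q`–`L^r` off-diagonal decay of type `(κ, m, M)` with constant `C`. -/
def HasOffDiagDecay (n : ℕ) (K : ℝ → ℝ → (L2 n →L[ℂ] L2 n)) (q r : ℝ≥0∞)
    (κ : ℝ) (m : ℕ) (M : ℝ) (C : ℝ≥0) : Prop :=
  ∀ t s : ℝ, t ≠ s → ∀ E F : Set (Spc n), MeasurableSet E → (hF : MeasurableSet F) →
    ∀ f : L2 n,
      eLpNorm (E.indicator (⇑(K t s (indL2 F hF f)))) r volume ≤
        C * ENNReal.ofReal (|t - s| ^ (-1 + κ - ((n : ℝ) / m) * ((1/q).toReal - (1/r).toReal)))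
          * (1 + setEDist E F ^ (m : ℝ) / ENNReal.ofReal |t - s|) ^ (-M)
          * eLpNorm (F.indicator (⇑f)) q volume

/-- A singular kernel of type `(κ, m, q, M)`: a strongly measurable family of bounded
operators on `L²(ℝⁿ)` with `‖K(t,s)‖ ≤ C|t-s|^{-1+κ}` and `L^q`–`L²` (resp. `L²`–`L^q`)
off-diagonal decay of type `(κ,m,M)` when `q ≤ 2` (resp. `q ≥ 2`). -/
def IsSingularKernel (n : ℕ) (K : ℝ → ℝ → (L2 n →L[ℂ] L2 n))
    (κ : ℝ) (m : ℕ) (q : ℝ≥0∞) (M : ℝ) : Prop :=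
  (∀ f : L2 n, StronglyMeasurable (fun p : ℝ × ℝ => K p.1 p.2 f)) ∧
  (∃ C : ℝ≥0, ∀ t s : ℝ, t ≠ s → ‖K t s‖ ≤ C * |t - s| ^ (-1 + κ)) ∧
  (∃ C : ℝ≥0, if q ≤ 2 then HasOffDiagDecay n K q 2 κ m M C
              else HasOffDiagDecay n K 2 q κ m M C)

/-- The quantity `ω(t,s) = ‖𝟙_{Q₀}(t) K(t,s) 𝟙_{Q₁}(s)‖_{L(L²)}` for rectangles
`Q₀ = I₀ × S₀` and `Q₁ = I₁ × S₁`, expressed as a supremum of ratios. -/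
def omegaQ (n : ℕ) (K : ℝ → ℝ → (L2 n →L[ℂ] L2 n))
    (I₀ I₁ : Set ℝ) (S₀ S₁ : Set (Spc n)) (hS₁ : MeasurableSet S₁) (t s : ℝ) : ℝ≥0∞ :=
  (I₀.indicator (fun _ => (1 : ℝ≥0∞)) t) * (I₁.indicator (fun _ => (1 : ℝ≥0∞)) s) *
    ⨆ f : L2 n,
      eLpNorm (S₀.indicator (⇑(K t s (indL2 S₁ hS₁ f)))) 2 volume / eLpNorm (⇑f) 2 volume

/-! ### Auxiliary lemmas -/

lemma neg_setLIntegral (g : ℝ → ℝ≥0∞) (S : Set ℝ) :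
    ∫⁻ u in (fun x : ℝ => -x) ⁻¹' S, g (-u) = ∫⁻ u in S, g u :=
  (Measure.measurePreserving_neg _).setLIntegral_comp_preimage_emb
    (MeasurableEquiv.neg ℝ).measurableEmbedding g S

lemma add_setLIntegral (t : ℝ) (g : ℝ → ℝ≥0∞) (S : Set ℝ) :
    ∫⁻ u in (fun x : ℝ => x + t) ⁻¹' S, g (u + t) = ∫⁻ u in S, g u :=
  (measurePreserving_add_right _ t).setLIntegral_comp_preimage_emb
    (MeasurableEquiv.addRight t).measurableEmbedding g S

lemma Jfin (D β : ℝ) (hβ : -1 < β) : ∫⁻ u in Ioo (-D) D, ENNReal.ofReal (|u| ^ β) < ∞ := by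
  rcases le_or_gt D 0 with hD | hD
  · rw [Set.Ioo_eq_empty (by linarith)]; simp
  · have h1 : ∫⁻ u in Ioo (0:ℝ) D, ENNReal.ofReal (|u| ^ β) < ∞ := by
      have heq : ∫⁻ u in Ioo (0:ℝ) D, ENNReal.ofReal (|u| ^ β)
          = ∫⁻ u in Ioo (0:ℝ) D, ENNReal.ofReal (u ^ β) := by
        refine setLIntegral_congr_fun measurableSet_Ioo ?_
        intro u hu
        simp only [abs_of_pos hu.1]
      rw [heq]
      exact ((intervalIntegral.integrableOn_Ioo_rpow_iff hD).2 hβ).setLIntegral_lt_top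
    have h2 : ∫⁻ u in Ioo (-D) (0:ℝ), ENNReal.ofReal (|u| ^ β) < ∞ := by
      have : ∫⁻ u in Ioo (-D) (0:ℝ), ENNReal.ofReal (|u| ^ β)
          = ∫⁻ u in Ioo (0:ℝ) D, ENNReal.ofReal (|u| ^ β) := by
        have hpre : (fun x : ℝ => -x) ⁻¹' Ioo (-D) (0:ℝ) = Ioo (0:ℝ) D := by
          ext x; simp
        calc ∫⁻ u in Ioo (-D) (0:ℝ), ENNReal.ofReal (|u| ^ β)
            = ∫⁻ u in (fun x : ℝ => -x) ⁻¹' Ioo (-D) (0:ℝ),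
                ENNReal.ofReal (|(-u)| ^ β) := by
              rw [neg_setLIntegral (fun u => ENNReal.ofReal (|u| ^ β))]
          _ = ∫⁻ u in Ioo (0:ℝ) D, ENNReal.ofReal (|u| ^ β) := by
              rw [hpre]; simp
      rw [this]; exact h1
    have hsub : Ioo (-D) D ⊆ Ioo (-D) 0 ∪ Ico 0 D := by
      intro x hx
      rcases lt_or_ge x 0 with h | h
      · exact Or.inl ⟨hx.1, h⟩
      · exact Or.inr ⟨h, hx.2⟩
    have hIco : ∫⁻ u in Ico (0:ℝ) D, ENNReal.ofReal (|u| ^ β)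
        = ∫⁻ u in Ioo (0:ℝ) D, ENNReal.ofReal (|u| ^ β) :=
      setLIntegral_congr Ioo_ae_eq_Ico.symm
    calc ∫⁻ u in Ioo (-D) D, ENNReal.ofReal (|u| ^ β)
        ≤ ∫⁻ u in Ioo (-D) 0 ∪ Ico 0 D, ENNReal.ofReal (|u| ^ β) :=
          lintegral_mono_set hsub
      _ ≤ (∫⁻ u in Ioo (-D) 0, ENNReal.ofReal (|u| ^ β))
          + ∫⁻ u in Ico 0 D, ENNReal.ofReal (|u| ^ β) := lintegral_union_le _ _ _
      _ < ∞ := by rw [hIco]; exact ENNReal.add_lt_top.2 ⟨h2, h1⟩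

lemma schur_half (ω : ℝ → ℝ → ℝ≥0∞) (D : ℝ) (c : ℝ≥0∞) (hc : c ≠ ∞) (β : ℝ)
    (hω : ∀ t s : ℝ, t ≠ s → ω t s ≤ (Ioo 0 D).indicator (fun _ => (1:ℝ≥0∞)) t *
      ((Ioo 0 D).indicator (fun _ => (1:ℝ≥0∞)) s * (c * ENNReal.ofReal (|t - s| ^ β))))
    (t : ℝ) :
    ∫⁻ s in Ioi (0:ℝ), ω t s ≤ c * ∫⁻ u in Ioo (-D) D, ENNReal.ofReal (|u| ^ β) := by
  by_cases ht : t ∈ Ioo (0:ℝ) D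
  · have hmono : ∀ᵐ s ∂(volume.restrict (Ioi (0:ℝ))),
        ω t s ≤ (Ioo (t - D) (t + D)).indicator
          (fun s => c * ENNReal.ofReal (|t - s| ^ β)) s := by
      refine ae_restrict_of_ae ?_
      have hne : ∀ᵐ s : ℝ, s ≠ t := by
        refine ae_iff.mpr ?_
        simpa using measure_singleton t
      filter_upwards [hne] with s hs
      refine (hω t s (Ne.symm hs)).trans ?_
      by_cases h1 : s ∈ Ioo (0:ℝ) D
      · have h2 : s ∈ Ioo (t - D) (t + D) := by
          constructor <;> [linarith [ht.2, h1.1]; linarith [ht.1, h1.2]]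
        rw [indicator_of_mem ht, indicator_of_mem h1, indicator_of_mem h2]
        simp
      · rw [indicator_of_notMem h1]
        simp
    calc ∫⁻ s in Ioi (0:ℝ), ω t s
        ≤ ∫⁻ s in Ioi (0:ℝ), (Ioo (t - D) (t + D)).indicator
            (fun s => c * ENNReal.ofReal (|t - s| ^ β)) s := lintegral_mono_ae hmono
      _ ≤ ∫⁻ s, (Ioo (t - D) (t + D)).indicator
            (fun s => c * ENNReal.ofReal (|t - s| ^ β)) s :=
          setLIntegral_le_lintegral _ _
      _ = ∫⁻ s in Ioo (t - D) (t + D), c * ENNReal.ofReal (|t - s| ^ β) :=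
          lintegral_indicator measurableSet_Ioo _
      _ = c * ∫⁻ s in Ioo (t - D) (t + D), ENNReal.ofReal (|t - s| ^ β) :=
          lintegral_const_mul' _ _ hc
      _ = c * ∫⁻ u in Ioo (-D) D, ENNReal.ofReal (|u| ^ β) := by
          congr 1
          have hpre : (fun x : ℝ => x + t) ⁻¹' Ioo (t - D) (t + D) = Ioo (-D) D := by
            ext x; simp
          calc ∫⁻ s in Ioo (t - D) (t + D), ENNReal.ofReal (|t - s| ^ β)
              = ∫⁻ u in (fun x : ℝ => x + t) ⁻¹' Ioo (t - D) (t + D),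
                  ENNReal.ofReal (|t - (u + t)| ^ β) := by
                rw [add_setLIntegral t (fun s => ENNReal.ofReal (|t - s| ^ β))]
            _ = ∫⁻ u in Ioo (-D) D, ENNReal.ofReal (|u| ^ β) := by
                rw [hpre]
                refine setLIntegral_congr_fun measurableSet_Ioo ?_
                intro u hu
                congr 2
                simp only [show t - (u + t) = -u by ring, abs_neg]
  · have hmono : ∀ᵐ s ∂(volume.restrict (Ioi (0:ℝ))), ω t s ≤ 0 := by
      refine ae_restrict_of_ae ?_
      have hne : ∀ᵐ s : ℝ, s ≠ t := by
        refine ae_iff.mpr ?_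
        simpa using measure_singleton t
      filter_upwards [hne] with s hs
      refine (hω t s (Ne.symm hs)).trans ?_
      rw [indicator_of_notMem ht]
      simp
    calc ∫⁻ s in Ioi (0:ℝ), ω t s ≤ ∫⁻ _ in Ioi (0:ℝ), 0 := lintegral_mono_ae hmono
      _ = 0 := lintegral_zero
      _ ≤ _ := zero_le

lemma schur_final (ω : ℝ → ℝ → ℝ≥0∞) (D : ℝ) (c : ℝ≥0∞) (hc : c ≠ ∞) (β : ℝ) (hβ : -1 < β)
    (hω : ∀ t s : ℝ, t ≠ s → ω t s ≤ (Ioo 0 D).indicator (fun _ => (1:ℝ≥0∞)) t *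
      ((Ioo 0 D).indicator (fun _ => (1:ℝ≥0∞)) s * (c * ENNReal.ofReal (|t - s| ^ β)))) :
    ∃ C : ℝ≥0∞, C ≠ ∞ ∧ (∀ t : ℝ, ∫⁻ s in Ioi (0:ℝ), ω t s ≤ C) ∧
      (∀ s : ℝ, ∫⁻ t in Ioi (0:ℝ), ω t s ≤ C) := by
  refine ⟨c * ∫⁻ u in Ioo (-D) D, ENNReal.ofReal (|u| ^ β),
    ENNReal.mul_ne_top hc (Jfin D β hβ).ne, fun t => schur_half ω D c hc β hω t, fun s => ?_⟩
  have hω' : ∀ a b : ℝ, a ≠ b → (fun a b => ω b a) a b ≤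
      (Ioo 0 D).indicator (fun _ => (1:ℝ≥0∞)) a *
      ((Ioo 0 D).indicator (fun _ => (1:ℝ≥0∞)) b * (c * ENNReal.ofReal (|a - b| ^ β))) := by
    intro a b hab
    refine (hω b a (Ne.symm hab)).trans (le_of_eq ?_)
    rw [abs_sub_comm b a]
    ring
  exact schur_half _ D c hc β hω' s

lemma eLpNorm_coe (n : ℕ) (f : L2 n) : eLpNorm (⇑f) 2 volume = ENNReal.ofReal ‖f‖ := by
  rw [Lp.norm_def, ENNReal.ofReal_toReal (Lp.eLpNorm_ne_top f)]

lemma indL2_coe {n : ℕ} (F : Set (Spc n)) (hF : MeasurableSet F) (f : L2 n) :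
    ⇑(indL2 F hF f) =ᵐ[volume] F.indicator ⇑f :=
  MemLp.coeFn_toLp _

lemma indL2_norm_le {n : ℕ} (F : Set (Spc n)) (hF : MeasurableSet F) (f : L2 n) :
    ENNReal.ofReal ‖indL2 F hF f‖ ≤ eLpNorm (⇑f) 2 volume := by
  rw [← eLpNorm_coe, eLpNorm_congr_ae (indL2_coe F hF f)]
  exact eLpNorm_indicator_le _

lemma ratio_bound_of_norm {n : ℕ} (A : L2 n →L[ℂ] L2 n) (S₀ S₁ : Set (Spc n))
    (hS₁ : MeasurableSet S₁) (f : L2 n) :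
    eLpNorm (S₀.indicator ⇑(A (indL2 S₁ hS₁ f))) 2 volume ≤
      ENNReal.ofReal ‖A‖ * eLpNorm (⇑f) 2 volume := by
  calc eLpNorm (S₀.indicator ⇑(A (indL2 S₁ hS₁ f))) 2 volume
      ≤ eLpNorm (⇑(A (indL2 S₁ hS₁ f))) 2 volume := eLpNorm_indicator_le _
    _ = ENNReal.ofReal ‖A (indL2 S₁ hS₁ f)‖ := eLpNorm_coe n _
    _ ≤ ENNReal.ofReal (‖A‖ * ‖indL2 S₁ hS₁ f‖) :=
        ENNReal.ofReal_le_ofReal (A.le_opNorm _)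
    _ = ENNReal.ofReal ‖A‖ * ENNReal.ofReal ‖indL2 S₁ hS₁ f‖ :=
        ENNReal.ofReal_mul (norm_nonneg _)
    _ ≤ ENNReal.ofReal ‖A‖ * eLpNorm (⇑f) 2 volume := by
        gcongr
        exact indL2_norm_le _ _ _

lemma holder1 {n : ℕ} (q : ℝ≥0∞) (hq2 : q ≤ 2) (S : Set (Spc n)) (hS : MeasurableSet S)
    (g : Spc n → ℂ) (hg : AEStronglyMeasurable g (volume : Measure (Spc n))) :
    eLpNorm (S.indicator g) q volume ≤
      eLpNorm g 2 volume * volume S ^ (1 / q.toReal - 1 / 2) := by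
  rw [eLpNorm_indicator_eq_eLpNorm_restrict hS]
  calc eLpNorm g q (volume.restrict S)
      ≤ eLpNorm g 2 (volume.restrict S) *
        (volume.restrict S) Set.univ ^ (1 / q.toReal - 1 / (2:ℝ≥0∞).toReal) :=
        eLpNorm_le_eLpNorm_mul_rpow_measure_univ hq2 hg.restrict
    _ ≤ eLpNorm g 2 volume * volume S ^ (1 / q.toReal - 1 / 2) := by
        rw [Measure.restrict_apply_univ, show (2:ℝ≥0∞).toReal = 2 by norm_num]
        gcongr
        exact Measure.restrict_le_self

lemma holder2 {n : ℕ} (q : ℝ≥0∞) (hq2 : 2 ≤ q) (S : Set (Spc n)) (hS : MeasurableSet S)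
    (g : Spc n → ℂ) (hg : AEStronglyMeasurable g (volume : Measure (Spc n))) :
    eLpNorm (S.indicator g) 2 volume ≤
      eLpNorm (S.indicator g) q volume * volume S ^ (1 / 2 - 1 / q.toReal) := by
  rw [eLpNorm_indicator_eq_eLpNorm_restrict hS, eLpNorm_indicator_eq_eLpNorm_restrict hS]
  calc eLpNorm g 2 (volume.restrict S)
      ≤ eLpNorm g q (volume.restrict S) *
        (volume.restrict S) Set.univ ^ (1 / (2:ℝ≥0∞).toReal - 1 / q.toReal) :=
        eLpNorm_le_eLpNorm_mul_rpow_measure_univ hq2 hg.restrict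
    _ = eLpNorm g q (volume.restrict S) * volume S ^ (1 / 2 - 1 / q.toReal) := by
        rw [Measure.restrict_apply_univ]; norm_num

lemma decay_factor_le (ε u : ℝ) (hε : 0 < ε) (hu : 0 < u) (m : ℕ) (M : ℝ) (hM : 0 ≤ M)
    (d : ℝ≥0∞) (hd : ENNReal.ofReal ε ≤ d) :
    (1 + d ^ (m:ℝ) / ENNReal.ofReal u) ^ (-M) ≤
      ENNReal.ofReal ((ε ^ (m:ℝ)) ^ (-M) * u ^ M) := by
  have hεm : (0:ℝ) < ε ^ (m:ℝ) := Real.rpow_pos_of_pos hε _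
  have h1 : ENNReal.ofReal (ε ^ (m:ℝ)) / ENNReal.ofReal u ≤ 1 + d ^ (m:ℝ) / ENNReal.ofReal u := by
    refine le_add_of_nonneg_of_le zero_le ?_
    gcongr
    rw [← ENNReal.ofReal_rpow_of_pos hε]
    exact ENNReal.rpow_le_rpow hd (Nat.cast_nonneg m)
  calc (1 + d ^ (m:ℝ) / ENNReal.ofReal u) ^ (-M)
      ≤ (ENNReal.ofReal (ε ^ (m:ℝ)) / ENNReal.ofReal u) ^ (-M) := by
        rw [ENNReal.rpow_neg, ENNReal.rpow_neg]
        exact ENNReal.inv_le_inv' (ENNReal.rpow_le_rpow h1 hM)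
    _ = ENNReal.ofReal ((ε ^ (m:ℝ)) ^ (-M) * u ^ M) := by
        rw [← ENNReal.ofReal_div_of_pos hu, ENNReal.ofReal_rpow_of_pos (by positivity)]
        congr 1
        rw [Real.div_rpow hεm.le hu.le, Real.rpow_neg hu.le, div_inv_eq_mul]

lemma ofReal_merge (α M u : ℝ) (hu : 0 < u) (c : ℝ) (hc : 0 ≤ c) :
    ENNReal.ofReal (u ^ α) * ENNReal.ofReal (c * u ^ M) =
      ENNReal.ofReal c * ENNReal.ofReal (u ^ (α + M)) := by
  rw [← ENNReal.ofReal_mul (by positivity), ← ENNReal.ofReal_mul hc, Real.rpow_add hu]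
  ring_nf

/-- Schur-type bounds: if `K` is a singular kernel of type `(κ,m,q,M)` with `κ ≤ 0`
and `M > (n/m)|1/q - 1/2| - κ`, and `Q₀ = I₀ × S₀`, `Q₁ = I₁ × S₁` are bounded
rectangles in `(0,∞) × ℝⁿ` with either the time projections or the space projections
at distance at least `ε > 0`, then `∫₀^∞ ω(t,s) ds` and `∫₀^∞ ω(t,s) dt` are bounded
by a finite constant (depending on `ε, Q₀, Q₁, κ, m, M, q`). -/
theorem stmt2 (n m : ℕ) (hm : 0 < m) (κ : ℝ) (q : ℝ≥0∞) (hq : 1 ≤ q) (M : ℝ)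
    (hκ : κ ≤ 0)
    (hM : ((n : ℝ) / m) * |(1/q).toReal - (1/2 : ℝ)| - κ < M)
    (K : ℝ → ℝ → (L2 n →L[ℂ] L2 n)) (hK : IsSingularKernel n K κ m q M)
    (I₀ I₁ : Set ℝ) (S₀ S₁ : Set (Spc n))
    (hS₀ : MeasurableSet S₀) (hS₁ : MeasurableSet S₁)
    (hI₀ : Bornology.IsBounded I₀) (hI₁ : Bornology.IsBounded I₁)
    (hI₀pos : I₀ ⊆ Ioi 0) (hI₁pos : I₁ ⊆ Ioi 0)
    (hS₀b : Bornology.IsBounded S₀) (hS₁b : Bornology.IsBounded S₁)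
    (ε : ℝ) (hε : 0 < ε)
    (hsep : ENNReal.ofReal ε ≤ setEDist I₀ I₁ ∨ ENNReal.ofReal ε ≤ setEDist S₀ S₁) :
    ∃ C : ℝ≥0∞, C ≠ ∞ ∧
      (∀ t : ℝ, ∫⁻ s in Ioi (0:ℝ), omegaQ n K I₀ I₁ S₀ S₁ hS₁ t s ≤ C) ∧
      (∀ s : ℝ, ∫⁻ t in Ioi (0:ℝ), omegaQ n K I₀ I₁ S₀ S₁ hS₁ t s ≤ C) := by
  obtain ⟨-, ⟨C₁, hC₁⟩, ⟨C₂, hC₂⟩⟩ := hK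
  obtain ⟨r₀, hr₀⟩ := hI₀.subset_ball 0
  obtain ⟨r₁, hr₁⟩ := hI₁.subset_ball 0
  set D := max r₀ r₁ with hDdef
  have hI₀D : I₀ ⊆ Ioo 0 D := by
    intro x hx
    refine ⟨hI₀pos hx, ?_⟩
    have := hr₀ hx
    rw [mem_ball, Real.dist_eq, sub_zero] at this
    exact lt_of_le_of_lt (le_abs_self x) (lt_of_lt_of_le this (le_max_left _ _))
  have hI₁D : I₁ ⊆ Ioo 0 D := by
    intro x hx
    refine ⟨hI₁pos hx, ?_⟩
    have := hr₁ hx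
    rw [mem_ball, Real.dist_eq, sub_zero] at this
    exact lt_of_le_of_lt (le_abs_self x) (lt_of_lt_of_le this (le_max_right _ _))
  set A : ℝ := |(1/q).toReal - (1/2 : ℝ)| with hAdef
  have hA0 : 0 ≤ A := abs_nonneg _
  have hnm : 0 ≤ (n:ℝ)/m * A := by positivity
  have hM0 : 0 ≤ M := by linarith
  set α : ℝ := -1 + κ - (n:ℝ)/m * A with hαdef
  rcases hsep with hsepT | hsepS
  · -- time separation
    have hbound : ∀ t s : ℝ, t ≠ s → omegaQ n K I₀ I₁ S₀ S₁ hS₁ t s ≤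
        (Ioo 0 D).indicator (fun _ => (1:ℝ≥0∞)) t *
        ((Ioo 0 D).indicator (fun _ => (1:ℝ≥0∞)) s *
          (ENNReal.ofReal (C₁ * ε ^ (-1 + κ)) * ENNReal.ofReal (|t - s| ^ (0:ℝ)))) := by
      intro t s hts
      rw [omegaQ]
      by_cases ht : t ∈ I₀
      swap
      · rw [indicator_of_notMem ht]; simp
      by_cases hs : s ∈ I₁
      swap
      · rw [indicator_of_notMem hs]; simp
      rw [indicator_of_mem ht, indicator_of_mem hs, one_mul, one_mul,
        indicator_of_mem (hI₀D ht), indicator_of_mem (hI₁D hs), one_mul, one_mul,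
        Real.rpow_zero, ENNReal.ofReal_one, mul_one]
      refine iSup_le fun f => ENNReal.div_le_of_le_mul ?_
      have hεu : ε ≤ |t - s| := by
        have hd : setEDist I₀ I₁ ≤ edist t s := by
          unfold setEDist
          exact le_trans (iInf₂_le t ht) (iInf₂_le s hs)
        have := le_trans hsepT hd
        rw [edist_dist, Real.dist_eq] at this
        exact (ENNReal.ofReal_le_ofReal_iff (abs_nonneg _)).1 this
      calc eLpNorm (S₀.indicator ⇑(K t s (indL2 S₁ hS₁ f))) 2 volume
          ≤ ENNReal.ofReal ‖K t s‖ * eLpNorm (⇑f) 2 volume :=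
            ratio_bound_of_norm _ _ _ _ _
        _ ≤ ENNReal.ofReal (C₁ * ε ^ (-1 + κ)) * eLpNorm (⇑f) 2 volume := by
            gcongr
            refine (hC₁ t s hts).trans ?_
            have : |t - s| ^ (-1 + κ) ≤ ε ^ (-1 + κ) :=
              Real.rpow_le_rpow_of_nonpos hε hεu (by linarith)
            exact mul_le_mul_of_nonneg_left this C₁.coe_nonneg
    exact schur_final _ D _ ENNReal.ofReal_ne_top 0 (by norm_num) hbound
  · -- space separation
    have h2top : (1/(2:ℝ≥0∞)).toReal = 1/2 := by
      rw [one_div, ENNReal.toReal_inv]; norm_num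
    have hq1top : (1/q).toReal = 1/q.toReal := by
      rw [one_div, one_div, ENNReal.toReal_inv]
    have hβ : -1 < α + M := by
      rw [hαdef]; linarith
    rcases le_or_gt q 2 with hq2 | hq2
    · rw [if_pos hq2] at hC₂
      have h12 : (1/2 : ℝ) ≤ (1/q).toReal := by
        have hle : (1/(2:ℝ≥0∞)) ≤ 1/q := by
          rw [one_div, one_div]
          exact ENNReal.inv_le_inv' hq2
        have hne : (1/q : ℝ≥0∞) ≠ ∞ := by
          refine ne_top_of_le_ne_top (by norm_num : (1:ℝ≥0∞) ≠ ∞) ?_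
          rw [one_div]
          simpa using ENNReal.inv_le_inv' hq
        have := ENNReal.toReal_mono hne hle
        rwa [h2top] at this
      have hAeq : A = (1/q).toReal - 1/2 := abs_of_nonneg (by linarith)
      have hexp : -1 + κ - (n:ℝ)/m * ((1/q).toReal - (1/(2:ℝ≥0∞)).toReal) = α := by
        rw [h2top, hαdef, hAeq]
      set V : ℝ≥0∞ := volume S₁ ^ A with hVdef
      have hVne : V ≠ ∞ :=
        ENNReal.rpow_ne_top_of_nonneg hA0 hS₁b.measure_lt_top.ne
      set c : ℝ≥0∞ := C₂ * V * ENNReal.ofReal ((ε ^ (m:ℝ)) ^ (-M)) with hcdef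
      have hcne : c ≠ ∞ :=
        ENNReal.mul_ne_top (ENNReal.mul_ne_top ENNReal.coe_ne_top hVne) ENNReal.ofReal_ne_top
      have hbound : ∀ t s : ℝ, t ≠ s → omegaQ n K I₀ I₁ S₀ S₁ hS₁ t s ≤
          (Ioo 0 D).indicator (fun _ => (1:ℝ≥0∞)) t *
          ((Ioo 0 D).indicator (fun _ => (1:ℝ≥0∞)) s *
            (c * ENNReal.ofReal (|t - s| ^ (α + M)))) := by
        intro t s hts
        rw [omegaQ]
        by_cases ht : t ∈ I₀
        swap
        · rw [indicator_of_notMem ht]; simp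
        by_cases hs : s ∈ I₁
        swap
        · rw [indicator_of_notMem hs]; simp
        rw [indicator_of_mem ht, indicator_of_mem hs, one_mul, one_mul,
          indicator_of_mem (hI₀D ht), indicator_of_mem (hI₁D hs), one_mul, one_mul]
        refine iSup_le fun f => ENNReal.div_le_of_le_mul ?_
        have hu : 0 < |t - s| := abs_pos.2 (sub_ne_zero.2 hts)
        have hmerge : ENNReal.ofReal (|t - s| ^ α) *
            ENNReal.ofReal ((ε ^ (m:ℝ)) ^ (-M) * |t - s| ^ M) =
            ENNReal.ofReal ((ε ^ (m:ℝ)) ^ (-M)) * ENNReal.ofReal (|t - s| ^ (α + M)) :=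
          ofReal_merge α M _ hu _ (by positivity)
        calc eLpNorm (S₀.indicator ⇑(K t s (indL2 S₁ hS₁ f))) 2 volume
            ≤ C₂ * ENNReal.ofReal (|t - s| ^
                (-1 + κ - ((n : ℝ) / m) * ((1/q).toReal - (1/(2:ℝ≥0∞)).toReal)))
              * (1 + setEDist S₀ S₁ ^ (m : ℝ) / ENNReal.ofReal |t - s|) ^ (-M)
              * eLpNorm (S₁.indicator (⇑f)) q volume := hC₂ t s hts S₀ S₁ hS₀ hS₁ f
          _ ≤ C₂ * ENNReal.ofReal (|t - s| ^ α)
              * ENNReal.ofReal ((ε ^ (m:ℝ)) ^ (-M) * |t - s| ^ M)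
              * (eLpNorm (⇑f) 2 volume * V) := by
              rw [hexp]
              gcongr
              · exact decay_factor_le ε _ hε hu m M hM0 _ hsepS
              · rw [hVdef, hAeq, hq1top]
                exact holder1 q hq2 S₁ hS₁ _ (Lp.aestronglyMeasurable f)
          _ = (c * ENNReal.ofReal (|t - s| ^ (α + M))) * eLpNorm (⇑f) 2 volume := by
              rw [show (C₂:ℝ≥0∞) * ENNReal.ofReal (|t - s| ^ α)
                  * ENNReal.ofReal ((ε ^ (m:ℝ)) ^ (-M) * |t - s| ^ M)
                  = (C₂:ℝ≥0∞) * (ENNReal.ofReal (|t - s| ^ α)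
                    * ENNReal.ofReal ((ε ^ (m:ℝ)) ^ (-M) * |t - s| ^ M)) from by ring,
                hmerge, hcdef]
              ring
      exact schur_final _ D c hcne (α + M) hβ hbound
    · rw [if_neg (not_le.2 hq2)] at hC₂
      have h12 : (1/q).toReal ≤ (1/2 : ℝ) := by
        have hle : (1/q : ℝ≥0∞) ≤ 1/2 := by
          rw [one_div, one_div]
          exact ENNReal.inv_le_inv' hq2.le
        have := ENNReal.toReal_mono (by norm_num) hle
        rwa [h2top] at this
      have hAeq : A = 1/2 - (1/q).toReal := by
        rw [hAdef, abs_of_nonpos (by linarith)]; ring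
      have hexp : -1 + κ - (n:ℝ)/m * ((1/(2:ℝ≥0∞)).toReal - (1/q).toReal) = α := by
        rw [h2top, hαdef, hAeq]
      set V : ℝ≥0∞ := volume S₀ ^ A with hVdef
      have hVne : V ≠ ∞ :=
        ENNReal.rpow_ne_top_of_nonneg hA0 hS₀b.measure_lt_top.ne
      set c : ℝ≥0∞ := C₂ * V * ENNReal.ofReal ((ε ^ (m:ℝ)) ^ (-M)) with hcdef
      have hcne : c ≠ ∞ :=
        ENNReal.mul_ne_top (ENNReal.mul_ne_top ENNReal.coe_ne_top hVne) ENNReal.ofReal_ne_top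
      have hbound : ∀ t s : ℝ, t ≠ s → omegaQ n K I₀ I₁ S₀ S₁ hS₁ t s ≤
          (Ioo 0 D).indicator (fun _ => (1:ℝ≥0∞)) t *
          ((Ioo 0 D).indicator (fun _ => (1:ℝ≥0∞)) s *
            (c * ENNReal.ofReal (|t - s| ^ (α + M)))) := by
        intro t s hts
        rw [omegaQ]
        by_cases ht : t ∈ I₀
        swap
        · rw [indicator_of_notMem ht]; simp
        by_cases hs : s ∈ I₁
        swap
        · rw [indicator_of_notMem hs]; simp
        rw [indicator_of_mem ht, indicator_of_mem hs, one_mul, one_mul,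
          indicator_of_mem (hI₀D ht), indicator_of_mem (hI₁D hs), one_mul, one_mul]
        refine iSup_le fun f => ENNReal.div_le_of_le_mul ?_
        have hu : 0 < |t - s| := abs_pos.2 (sub_ne_zero.2 hts)
        have hmerge : ENNReal.ofReal (|t - s| ^ α) *
            ENNReal.ofReal ((ε ^ (m:ℝ)) ^ (-M) * |t - s| ^ M) =
            ENNReal.ofReal ((ε ^ (m:ℝ)) ^ (-M)) * ENNReal.ofReal (|t - s| ^ (α + M)) :=
          ofReal_merge α M _ hu _ (by positivity)
        calc eLpNorm (S₀.indicator ⇑(K t s (indL2 S₁ hS₁ f))) 2 volume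
            ≤ eLpNorm (S₀.indicator ⇑(K t s (indL2 S₁ hS₁ f))) q volume * V := by
              rw [hVdef, hAeq, hq1top]
              exact holder2 q hq2.le S₀ hS₀ _ (Lp.aestronglyMeasurable _)
          _ ≤ (C₂ * ENNReal.ofReal (|t - s| ^
                (-1 + κ - ((n : ℝ) / m) * ((1/(2:ℝ≥0∞)).toReal - (1/q).toReal)))
              * (1 + setEDist S₀ S₁ ^ (m : ℝ) / ENNReal.ofReal |t - s|) ^ (-M)
              * eLpNorm (S₁.indicator (⇑f)) 2 volume) * V := by
              gcongr
              exact hC₂ t s hts S₀ S₁ hS₀ hS₁ f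
          _ ≤ (C₂ * ENNReal.ofReal (|t - s| ^ α)
              * ENNReal.ofReal ((ε ^ (m:ℝ)) ^ (-M) * |t - s| ^ M)
              * eLpNorm (⇑f) 2 volume) * V := by
              rw [hexp]
              gcongr
              · exact decay_factor_le ε _ hε hu m M hM0 _ hsepS
              · exact eLpNorm_indicator_le _
          _ = (c * ENNReal.ofReal (|t - s| ^ (α + M))) * eLpNorm (⇑f) 2 volume := by
              rw [show (C₂:ℝ≥0∞) * ENNReal.ofReal (|t - s| ^ α)
                  * ENNReal.ofReal ((ε ^ (m:ℝ)) ^ (-M) * |t - s| ^ M)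
                  * eLpNorm (⇑f) 2 volume * V
                  = (C₂:ℝ≥0∞) * (ENNReal.ofReal (|t - s| ^ α)
                    * ENNReal.ofReal ((ε ^ (m:ℝ)) ^ (-M) * |t - s| ^ M))
                    * eLpNorm (⇑f) 2 volume * V from by ring,
                hmerge, hcdef]
              ring
      exact schur_final _ D c hcne (α + M) hβ hbound
end
end

section
/- Let $\beta \in \mathbb{R}$, $\kappa \in \mathbb{R}$, and $z \in \mathbb{C}$ with $\operatorname{Re}(z) > -\beta - \frac{1}{2}$. Let $\{K(t,s)\}_{t \ne s}$ be a strongly measurable family of bounded operators on $L^2(\mathbb{R}^n)$ with $\|K(t,s)\|_{\mathcal{L}(L^2)} \le C|t-s|^{-1+\kappa}$. Then the operator $T_z f(t) := \int_0^{t/2} (s/t)^z K(t,s) f(s)\, ds$ is bounded from $L^2((0,\infty), t^{-2\beta}dt; L^2(\mathbb{R}^n))$ to $L^2((0,\infty), t^{-2(\beta+\kappa)}dt; L^2(\mathbb{R}^n))$. -/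
open MeasureTheory Metric Set ENNReal NNReal

noncomputable section

theorem aux_meas {n : ℕ} (K : ℝ → ℝ → (L2 n →L[ℂ] L2 n))
    (hmeas : ∀ f : L2 n, StronglyMeasurable (fun p : ℝ × ℝ => K p.1 p.2 f))
    (f : ℝ → L2 n) (hf : StronglyMeasurable f) :
    StronglyMeasurable (fun p : ℝ × ℝ => K p.1 p.2 (f p.2)) := by
  have key : ∀ g : SimpleFunc ℝ (L2 n),
      StronglyMeasurable (fun p : ℝ × ℝ => K p.1 p.2 (g p.2)) := by
    intro g
    induction g using SimpleFunc.induction with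
    | const c hs =>
      rename_i s
      have : (fun p : ℝ × ℝ => K p.1 p.2 ((SimpleFunc.piecewise s hs
          (SimpleFunc.const ℝ c) (SimpleFunc.const ℝ (0 : L2 n))) p.2))
          = fun p : ℝ × ℝ => ({p : ℝ × ℝ | p.2 ∈ s}).indicator
              (fun p : ℝ × ℝ => K p.1 p.2 c) p := by
        funext p
        by_cases hp : p.2 ∈ s <;>
          simp [SimpleFunc.piecewise_apply, hp, Set.indicator, map_zero]
      rw [this]
      exact (hmeas c).indicator (measurable_snd hs)
    | @add g₁ g₂ _ h1 h2 =>
      have : (fun p : ℝ × ℝ => K p.1 p.2 ((g₁ + g₂) p.2))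
          = fun p : ℝ × ℝ => K p.1 p.2 (g₁ p.2) + K p.1 p.2 (g₂ p.2) := by
        funext p; simp [map_add]
      rw [this]; exact h1.add h2
  refine stronglyMeasurable_of_tendsto Filter.atTop
    (f := fun m (p : ℝ × ℝ) => K p.1 p.2 (hf.approx m p.2))
    (fun m => key _) (tendsto_pi_nhds.mpr fun p => ?_)
  exact ((K p.1 p.2).continuous.tendsto _).comp (hf.tendsto_approx p.2)

theorem rpow_kernel_bound {κ t s : ℝ} (ht : 0 < t) (hs1 : 0 < s) (hs2 : s ≤ t/2) :
    (t - s) ^ (κ - 1) ≤ max 1 (2 ^ (1 - κ)) * t ^ (κ - 1) := by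
  rcases le_or_gt 0 (κ - 1) with h | h
  · calc (t - s) ^ (κ - 1) ≤ t ^ (κ - 1) :=
        Real.rpow_le_rpow (by linarith) (by linarith) h
    _ ≤ max 1 (2 ^ (1 - κ)) * t ^ (κ - 1) :=
        le_mul_of_one_le_left (Real.rpow_nonneg ht.le _) (le_max_left _ _)
  · have h1 : t / 2 ≤ t - s := by linarith
    calc (t - s) ^ (κ - 1) ≤ (t / 2) ^ (κ - 1) :=
        Real.rpow_le_rpow_of_nonpos (by linarith) h1 h.le
    _ = 2 ^ (1 - κ) * t ^ (κ - 1) := by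
        rw [Real.div_rpow ht.le (by norm_num : (0:ℝ) ≤ 2), div_eq_mul_inv,
          ← Real.rpow_neg (by norm_num : (0:ℝ) ≤ 2), mul_comm]
        congr 1
        · congr 1; ring
    _ ≤ max 1 (2 ^ (1 - κ)) * t ^ (κ - 1) :=
        mul_le_mul_of_nonneg_right (le_max_right _ _) (Real.rpow_nonneg ht.le _)

theorem lint_Ioc_rpow {r : ℝ} (hr : -1 < r) {c : ℝ} (hc : 0 < c) :
    ∫⁻ s in Ioc 0 c, ENNReal.ofReal (s ^ r) = ENNReal.ofReal (c ^ (r + 1) / (r + 1)) := by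
  rw [← ofReal_integral_eq_lintegral_ofReal]
  · congr 1
    rw [← intervalIntegral.integral_of_le hc.le, integral_rpow (Or.inl hr),
      Real.zero_rpow (by linarith : r + 1 ≠ 0)]
    ring
  · exact (intervalIntegrable_iff_integrableOn_Ioc_of_le hc.le).mp
      (intervalIntegral.intervalIntegrable_rpow' hr)
  · exact ae_restrict_of_forall_mem measurableSet_Ioc fun s hs => Real.rpow_nonneg hs.1.le r

theorem lint_Ioi_rpow {r : ℝ} (hr : r < -1) {c : ℝ} (hc : 0 < c) :
    ∫⁻ t in Ioi c, ENNReal.ofReal (t ^ r) = ENNReal.ofReal (c ^ (r + 1) / (-(r + 1))) := by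
  rw [← ofReal_integral_eq_lintegral_ofReal (integrableOn_Ioi_rpow_of_lt hr hc)]
  · rw [integral_Ioi_rpow_of_lt hr hc, div_neg, neg_div]
  · exact ae_restrict_of_forall_mem measurableSet_Ioi fun s hs =>
      Real.rpow_nonneg (hc.trans hs).le r

theorem cs_sq {α : Type*} [MeasurableSpace α] (μ : Measure α) {F G : α → ℝ≥0∞}
    (hF : AEMeasurable F μ) (hG : AEMeasurable G μ) :
    (∫⁻ x, F x * G x ∂μ) ^ 2 ≤ (∫⁻ x, F x ^ 2 ∂μ) * (∫⁻ x, G x ^ 2 ∂μ) := by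
  have hpq : Real.HolderConjugate 2 2 := Real.HolderConjugate.two_two
  have h := ENNReal.lintegral_mul_le_Lp_mul_Lq μ hpq hF hG
  simp only [Pi.mul_apply] at h
  have h2 : ∀ x : ℝ≥0∞, x ^ (2:ℝ) = x ^ (2:ℕ) := fun x => by
    rw [← ENNReal.rpow_natCast]; norm_num
  simp only [h2] at h
  calc (∫⁻ x, F x * G x ∂μ) ^ 2
      ≤ ((∫⁻ x, F x ^ (2:ℕ) ∂μ) ^ (1/(2:ℝ)) * (∫⁻ x, G x ^ (2:ℕ) ∂μ) ^ (1/(2:ℝ))) ^ 2 :=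
        pow_le_pow_left' h 2
    _ = (∫⁻ x, F x ^ 2 ∂μ) * (∫⁻ x, G x ^ 2 ∂μ) := by
        rw [mul_pow]
        congr 1 <;>
        · rw [← ENNReal.rpow_natCast _ 2, ← ENNReal.rpow_mul]
          norm_num

set_option maxHeartbeats 2000000 in
/-- Let `K(t,s)` be a strongly measurable family of bounded operators on `L²(ℝⁿ)`
with `‖K(t,s)‖ ≤ C|t-s|^{-1+κ}`. For `z ∈ ℂ` with `Re z > -β - 1/2`, the operator
`T_z f(t) = ∫₀^{t/2} (s/t)^z K(t,s) f(s) ds` is bounded from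
`L²((0,∞), t^{-2β}dt; L²(ℝⁿ))` to `L²((0,∞), t^{-2(β+κ)}dt; L²(ℝⁿ))`, the integral
converging as a Bochner integral for a.e. `t > 0`. -/
theorem stmt4 (n : ℕ) (κ β : ℝ) (z : ℂ) (hz : -β - 1/2 < z.re)
    (K : ℝ → ℝ → (L2 n →L[ℂ] L2 n))
    (hmeas : ∀ f : L2 n, StronglyMeasurable (fun p : ℝ × ℝ => K p.1 p.2 f))
    (C₀ : ℝ≥0) (hbound : ∀ t s : ℝ, t ≠ s → ‖K t s‖ ≤ C₀ * |t - s| ^ (-1 + κ)) :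
    ∃ C : ℝ≥0, ∀ f : ℝ → L2 n,
      AEStronglyMeasurable f (volume.restrict (Ioi (0:ℝ))) →
      (∫⁻ t in Ioi (0:ℝ), ENNReal.ofReal (t ^ (-(2:ℝ)*β)) * (‖f t‖₊ : ℝ≥0∞) ^ 2) ≠ ∞ →
        (∀ᵐ t ∂(volume.restrict (Ioi (0:ℝ))),
          IntegrableOn (fun s => (((s / t : ℝ) : ℂ) ^ z) • K t s (f s)) (Ioc 0 (t/2)) volume) ∧
        ∫⁻ t in Ioi (0:ℝ),
            ENNReal.ofReal (t ^ (-(2:ℝ)*(β+κ))) *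
              (‖∫ s in Ioc 0 (t/2), (((s / t : ℝ) : ℂ) ^ z) • K t s (f s)‖₊ : ℝ≥0∞) ^ 2
          ≤ C * ∫⁻ t in Ioi (0:ℝ), ENNReal.ofReal (t ^ (-(2:ℝ)*β)) * (‖f t‖₊ : ℝ≥0∞) ^ 2 := by
  classical
  obtain ⟨a, ha_def⟩ : ∃ x : ℝ, x = z.re := ⟨_, rfl⟩
  obtain ⟨e, he_def⟩ : ∃ x : ℝ, x = a + β + 1/2 := ⟨_, rfl⟩
  have he : (0:ℝ) < e := by rw [he_def, ha_def]; linarith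
  obtain ⟨M, hMdef⟩ : ∃ x : ℝ, x = max 1 ((2:ℝ) ^ (1 - κ)) := ⟨_, rfl⟩
  have hM1 : (1:ℝ) ≤ M := hMdef ▸ le_max_left _ _
  have hM0 : (0:ℝ) < M := lt_of_lt_of_le one_pos hM1
  obtain ⟨C₁, hC₁def⟩ : ∃ x : ℝ, x = (C₀ : ℝ) * M := ⟨_, rfl⟩
  have hC₁0 : 0 ≤ C₁ := hC₁def ▸ mul_nonneg C₀.coe_nonneg hM0.le
  have h2e : (0:ℝ) < (2:ℝ) ^ (-e) / e := div_pos (Real.rpow_pos_of_pos two_pos _) he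
  obtain ⟨C₂, hC₂def⟩ : ∃ x : ℝ, x = C₁^2 * ((2:ℝ)^(-e) / e) := ⟨_, rfl⟩
  have hC₂0 : 0 ≤ C₂ := hC₂def ▸ mul_nonneg (sq_nonneg C₁) h2e.le
  refine ⟨(C₂ * ((2:ℝ)^(-e) / e)).toNNReal, ?_⟩
  intro f hf hfin
  -- measurable representative
  set f₀ : ℝ → L2 n := hf.mk f with hf₀def
  have hf₀ : StronglyMeasurable f₀ := hf.stronglyMeasurable_mk
  have hff₀ : f =ᵐ[volume.restrict (Ioi (0:ℝ))] f₀ := hf.ae_eq_mk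
  have hff₀' : ∀ t : ℝ, f =ᵐ[volume.restrict (Ioc 0 (t/2))] f₀ := fun t =>
    ae_restrict_of_ae_restrict_of_subset Ioc_subset_Ioi_self hff₀
  set g : ℝ → ℝ≥0∞ := fun s => (‖f₀ s‖₊ : ℝ≥0∞) with hgdef
  have hg : Measurable g := hf₀.enorm
  have hRHS : (∫⁻ t in Ioi (0:ℝ), ENNReal.ofReal (t ^ (-(2:ℝ)*β)) * g t ^ 2)
      = ∫⁻ t in Ioi (0:ℝ), ENNReal.ofReal (t ^ (-(2:ℝ)*β)) * (‖f t‖₊ : ℝ≥0∞) ^ 2 :=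
    lintegral_congr_ae (hff₀.mono fun t ht => by dsimp only [hgdef]; rw [ht])
  set u₀ : ℝ → ℝ → L2 n := fun t s => (((s / t : ℝ) : ℂ) ^ z) • K t s (f₀ s) with hu₀def
  have hu₀ : StronglyMeasurable (fun p : ℝ × ℝ => u₀ p.1 p.2) := by
    apply StronglyMeasurable.smul (f := fun p : ℝ × ℝ => (((p.2 / p.1 : ℝ) : ℂ) ^ z)) (g := fun p : ℝ × ℝ => K p.1 p.2 (f₀ p.2))
    · exact ((Complex.measurable_ofReal.comp
        (measurable_snd.div measurable_fst)).pow measurable_const).stronglyMeasurable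
    · exact aux_meas K hmeas f₀ hf₀
  have hu₀t : ∀ t : ℝ, StronglyMeasurable (fun s => u₀ t s) := fun t =>
    hu₀.comp_measurable (measurable_const.prodMk measurable_id)
  -- pointwise kernel bound
  have hptw : ∀ t, 0 < t → ∀ s ∈ Ioc (0:ℝ) (t/2),
      (‖u₀ t s‖₊ : ℝ≥0∞) ≤ ENNReal.ofReal (C₁ * t ^ (κ-1-a) * s ^ a) * g s := by
    intro t ht s hs
    obtain ⟨hs0, hs2⟩ := hs
    have hst : s < t := lt_of_le_of_lt hs2 (by linarith)
    have hgs : g s = ENNReal.ofReal ‖f₀ s‖ := (ofReal_norm _).symm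
    rw [hgs, ← ENNReal.ofReal_coe_nnreal, coe_nnnorm, ← ENNReal.ofReal_mul
      (mul_nonneg (mul_nonneg hC₁0 (Real.rpow_nonneg ht.le _)) (Real.rpow_nonneg hs0.le _))]
    apply ENNReal.ofReal_le_ofReal
    rw [hu₀def]
    simp only [norm_smul]
    have h1 : ‖(((s / t : ℝ) : ℂ) ^ z)‖ = (s/t) ^ a := by
      rw [Complex.norm_cpow_eq_rpow_re_of_pos (div_pos hs0 ht), ha_def]
    rw [h1]
    have hK : ‖K t s (f₀ s)‖ ≤ ((C₀:ℝ) * (t - s) ^ (κ-1)) * ‖f₀ s‖ := by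
      refine ((K t s).le_opNorm _).trans
        (mul_le_mul_of_nonneg_right ?_ (norm_nonneg _))
      have hb := hbound t s hst.ne'
      rwa [abs_of_pos (by linarith), (show -1 + κ = κ - 1 by ring)] at hb
    have hKM : (t - s) ^ (κ-1) ≤ M * t ^ (κ-1) := by
      rw [hMdef]; exact rpow_kernel_bound ht hs0 hs2
    have key : (s/t) ^ a * ‖K t s (f₀ s)‖
        ≤ (s/t) ^ a * (((C₀:ℝ) * (M * t ^ (κ-1))) * ‖f₀ s‖) := by
      refine mul_le_mul_of_nonneg_left (hK.trans ?_)
        (Real.rpow_nonneg (div_nonneg hs0.le ht.le) a)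
      exact mul_le_mul_of_nonneg_right
        (mul_le_mul_of_nonneg_left hKM C₀.coe_nonneg) (norm_nonneg _)
    refine key.trans (le_of_eq ?_)
    rw [Real.div_rpow hs0.le ht.le, div_eq_mul_inv, ← Real.rpow_neg ht.le,
      hC₁def, (show κ - 1 - a = (κ-1) + (-a) by ring), Real.rpow_add ht]
    ring
  -- the lintegral of the norm
  set N : ℝ → ℝ≥0∞ := fun t => ∫⁻ s in Ioc 0 (t/2), (‖u₀ t s‖₊ : ℝ≥0∞) with hNdef
  set ψ : ℝ → ℝ≥0∞ := fun s => ENNReal.ofReal (s ^ (a - β + 1/2)) * g s ^ 2 with hψdef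
  have hψm : Measurable ψ :=
    (ENNReal.measurable_ofReal.comp (measurable_id.pow measurable_const)).mul (hg.pow_const 2)
  have hψfin : ∀ s, ψ s ≠ ∞ := fun s =>
    ENNReal.mul_ne_top ENNReal.ofReal_ne_top (ENNReal.pow_ne_top ENNReal.coe_ne_top)
  set P : ℝ → ℝ≥0∞ := fun t => ∫⁻ s in Ioc 0 (t/2), ENNReal.ofReal (s ^ a) * g s with hPdef
  have h1 : ∀ t, 0 < t → N t ≤ ENNReal.ofReal (C₁ * t ^ (κ-1-a)) * P t := by
    intro t ht
    calc N t ≤ ∫⁻ s in Ioc 0 (t/2), ENNReal.ofReal (C₁ * t ^ (κ-1-a) * s ^ a) * g s :=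
      lintegral_mono_ae (ae_restrict_of_forall_mem measurableSet_Ioc (hptw t ht))
    _ = ∫⁻ s in Ioc 0 (t/2), ENNReal.ofReal (C₁ * t ^ (κ-1-a)) * (ENNReal.ofReal (s ^ a) * g s) := by
      refine setLIntegral_congr_fun measurableSet_Ioc (fun s hs => ?_)
      rw [← mul_assoc, ← ENNReal.ofReal_mul
        (mul_nonneg hC₁0 (Real.rpow_nonneg ht.le _))]
    _ = _ := lintegral_const_mul' _ _ ENNReal.ofReal_ne_top
  -- Cauchy-Schwarz
  have h2 : ∀ t, 0 < t → P t ^ 2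
      ≤ ENNReal.ofReal ((t/2) ^ e / e) * ∫⁻ s in Ioc 0 (t/2), ψ s := by
    intro t ht
    obtain ⟨b₁, hb₁def⟩ : ∃ x : ℝ, x = (a+β)/2 - 1/4 := ⟨_, rfl⟩
    have hsplit : P t = ∫⁻ s in Ioc 0 (t/2),
        ENNReal.ofReal (s ^ b₁) * (ENNReal.ofReal (s ^ (a - b₁)) * g s) := by
      refine setLIntegral_congr_fun measurableSet_Ioc (fun s hs => ?_)
      rw [← mul_assoc, ← ENNReal.ofReal_mul (Real.rpow_nonneg hs.1.le _),
        ← Real.rpow_add hs.1, (show b₁ + (a - b₁) = a by ring)]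
    have hcs := cs_sq (volume.restrict (Ioc 0 (t/2)))
      (F := fun s => ENNReal.ofReal (s ^ b₁))
      (G := fun s => ENNReal.ofReal (s ^ (a - b₁)) * g s)
      ((ENNReal.measurable_ofReal.comp (measurable_id.pow measurable_const)).aemeasurable)
      (((ENNReal.measurable_ofReal.comp (measurable_id.pow measurable_const)).mul hg).aemeasurable)
    rw [hsplit]
    refine hcs.trans (le_of_eq ?_)
    have hF2 : ∫⁻ s in Ioc 0 (t/2), (ENNReal.ofReal (s ^ b₁)) ^ 2
        = ENNReal.ofReal ((t/2) ^ e / e) := by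
      have heq : ∫⁻ s in Ioc 0 (t/2), (ENNReal.ofReal (s ^ b₁)) ^ 2
          = ∫⁻ s in Ioc 0 (t/2), ENNReal.ofReal (s ^ (a + β - 1/2)) := by
        refine setLIntegral_congr_fun measurableSet_Ioc (fun s hs => ?_)
        rw [← ENNReal.ofReal_pow (Real.rpow_nonneg hs.1.le _), ← Real.rpow_natCast (s ^ b₁) 2,
          ← Real.rpow_mul hs.1.le, (show b₁ * ((2:ℕ):ℝ) = a + β - 1/2 by
            rw [hb₁def]; push_cast; ring)]
      rw [heq, lint_Ioc_rpow (by rw [he_def] at he; linarith) (by linarith : (0:ℝ) < t/2),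
        (show a + β - 1/2 + 1 = e by rw [he_def]; ring)]
    have hG2 : ∫⁻ s in Ioc 0 (t/2), (ENNReal.ofReal (s ^ (a - b₁)) * g s) ^ 2
        = ∫⁻ s in Ioc 0 (t/2), ψ s := by
      refine setLIntegral_congr_fun measurableSet_Ioc (fun s hs => ?_)
      rw [mul_pow, ← ENNReal.ofReal_pow (Real.rpow_nonneg hs.1.le _),
        ← Real.rpow_natCast (s ^ (a - b₁)) 2, ← Real.rpow_mul hs.1.le,
        (show (a - b₁) * ((2:ℕ):ℝ) = a - β + 1/2 by rw [hb₁def]; push_cast; ring)]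
    rw [hF2, hG2]
  -- pointwise combination
  have h3 : ∀ t ∈ Ioi (0:ℝ),
      ENNReal.ofReal (t ^ (-(2:ℝ)*(β+κ))) * N t ^ 2
        ≤ ENNReal.ofReal C₂ * (ENNReal.ofReal (t ^ (-(e+1))) * ∫⁻ s in Ioc 0 (t/2), ψ s) := by
    intro t ht
    rw [mem_Ioi] at ht
    have step : N t ^ 2 ≤ ENNReal.ofReal ((C₁ * t ^ (κ-1-a))^2)
        * (ENNReal.ofReal ((t/2) ^ e / e) * ∫⁻ s in Ioc 0 (t/2), ψ s) := by
      calc N t ^ 2 ≤ (ENNReal.ofReal (C₁ * t ^ (κ-1-a)) * P t) ^ 2 :=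
        pow_le_pow_left' (h1 t ht) 2
      _ = ENNReal.ofReal (C₁ * t ^ (κ-1-a)) ^ 2 * P t ^ 2 := mul_pow _ _ 2
      _ ≤ ENNReal.ofReal (C₁ * t ^ (κ-1-a)) ^ 2
            * (ENNReal.ofReal ((t/2) ^ e / e) * ∫⁻ s in Ioc 0 (t/2), ψ s) :=
        mul_le_mul_right (h2 t ht) _
      _ = _ := by
        rw [← ENNReal.ofReal_pow (mul_nonneg hC₁0 (Real.rpow_nonneg ht.le _))]
    have hreal : t ^ (-(2:ℝ)*(β+κ)) * (C₁ * t ^ (κ-1-a))^2 * ((t/2) ^ e / e)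
        = C₂ * t ^ (-(e+1)) := by
      rw [mul_pow, ← Real.rpow_natCast (t ^ (κ-1-a)) 2, ← Real.rpow_mul ht.le,
        Real.div_rpow ht.le (by norm_num : (0:ℝ) ≤ 2), hC₂def,
        (show (-(e+1)) = (-(2:ℝ)*(β+κ)) + ((κ-1-a)*((2:ℕ):ℝ)) + e by
          rw [he_def, ha_def]; push_cast; rw [← ha_def]; rw [he_def] at he; ring),
        Real.rpow_add ht, Real.rpow_add ht, Real.rpow_neg (by norm_num : (0:ℝ) ≤ 2)]
      have h2epos : ((2:ℝ) ^ e) ≠ 0 := ne_of_gt (Real.rpow_pos_of_pos two_pos _)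
      field_simp
    calc ENNReal.ofReal (t ^ (-(2:ℝ)*(β+κ))) * N t ^ 2
        ≤ ENNReal.ofReal (t ^ (-(2:ℝ)*(β+κ))) * (ENNReal.ofReal ((C₁ * t ^ (κ-1-a))^2)
            * (ENNReal.ofReal ((t/2) ^ e / e) * ∫⁻ s in Ioc 0 (t/2), ψ s)) :=
          mul_le_mul_right step _
      _ = (ENNReal.ofReal (t ^ (-(2:ℝ)*(β+κ))) * ENNReal.ofReal ((C₁ * t ^ (κ-1-a))^2)
            * ENNReal.ofReal ((t/2) ^ e / e)) * ∫⁻ s in Ioc 0 (t/2), ψ s := by ring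
      _ = ENNReal.ofReal (C₂ * t ^ (-(e+1))) * ∫⁻ s in Ioc 0 (t/2), ψ s := by
          rw [← ENNReal.ofReal_mul (Real.rpow_nonneg ht.le _),
            ← ENNReal.ofReal_mul (mul_nonneg (Real.rpow_nonneg ht.le _) (sq_nonneg _)),
            hreal]
      _ = _ := by
          rw [ENNReal.ofReal_mul hC₂0, mul_assoc]
  -- integrate
  have Htot : ∫⁻ t in Ioi (0:ℝ), ENNReal.ofReal (t ^ (-(2:ℝ)*(β+κ))) * N t ^ 2
      ≤ ENNReal.ofReal C₂ *
        ∫⁻ t in Ioi (0:ℝ), ENNReal.ofReal (t ^ (-(e+1))) * ∫⁻ s in Ioc 0 (t/2), ψ s := by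
    rw [← lintegral_const_mul' _ _ ENNReal.ofReal_ne_top]
    exact lintegral_mono_ae (ae_restrict_of_forall_mem measurableSet_Ioi h3)
  -- Fubini
  set k : ℝ → ℝ → ℝ≥0∞ := fun t s =>
    (Ioc 0 (t/2)).indicator (fun s' => ENNReal.ofReal (t ^ (-(e+1))) * ψ s') s with hkdef
  have hS : MeasurableSet {p : ℝ × ℝ | 0 < p.2 ∧ p.2 ≤ p.1/2} :=
    (measurableSet_lt measurable_const measurable_snd).inter
      (measurableSet_le measurable_snd (measurable_fst.div_const 2))
  have hk_meas : Measurable (Function.uncurry k) := by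
    have heq : Function.uncurry k = ({p : ℝ × ℝ | 0 < p.2 ∧ p.2 ≤ p.1/2}).indicator
        (fun p : ℝ × ℝ => ENNReal.ofReal (p.1 ^ (-(e+1))) * ψ p.2) := by
      funext p
      rcases p with ⟨t, s⟩
      by_cases hp : s ∈ Ioc 0 (t/2)
      · simp only [Function.uncurry, hkdef, Set.indicator_of_mem hp]
        rw [Set.indicator_of_mem (by exact hp)]
      · simp only [Function.uncurry, hkdef, Set.indicator_of_notMem hp]
        rw [Set.indicator_of_notMem (by exact hp)]
    rw [heq]
    exact Measurable.indicator
      ((ENNReal.measurable_ofReal.comp (measurable_fst.pow measurable_const)).mul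
        (hψm.comp measurable_snd)) hS
  have step1 : ∀ t : ℝ, ENNReal.ofReal (t ^ (-(e+1))) * ∫⁻ s in Ioc 0 (t/2), ψ s
      = ∫⁻ s in Ioi (0:ℝ), k t s := by
    intro t
    simp only [hkdef]
    rw [lintegral_indicator measurableSet_Ioc,
      Measure.restrict_restrict measurableSet_Ioc,
      inter_eq_left.mpr Ioc_subset_Ioi_self,
      lintegral_const_mul' _ _ ENNReal.ofReal_ne_top]
  have step2 : ∀ s ∈ Ioi (0:ℝ), ∫⁻ t in Ioi (0:ℝ), k t s
      = ENNReal.ofReal ((2:ℝ)^(-e)/e) * (ENNReal.ofReal (s ^ (-(2:ℝ)*β)) * g s ^ 2) := by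
    intro s hs
    rw [mem_Ioi] at hs
    have hks : ∀ t, k t s = (Ici (2*s)).indicator
        (fun t' => ENNReal.ofReal (t' ^ (-(e+1)))) t * ψ s := by
      intro t
      simp only [hkdef]
      by_cases hp : s ∈ Ioc 0 (t/2)
      · rw [Set.indicator_of_mem hp, Set.indicator_of_mem (by
          rw [mem_Ici]; linarith [hp.2])]
      · rw [Set.indicator_of_notMem hp, Set.indicator_of_notMem (by
          rw [mem_Ici]
          intro hc
          exact hp ⟨hs, by linarith⟩), zero_mul]
    have hval : ((2*s:ℝ)) ^ (-(e+1) + 1) / (-(-(e+1) + 1)) * (s ^ (a - β + 1/2))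
        = (2:ℝ)^(-e)/e * s ^ (-(2:ℝ)*β) := by
      rw [(show -(e+1) + 1 = -e by ring)]
      rw [(show -(-e : ℝ) = e by ring)]
      rw [Real.mul_rpow (by norm_num : (0:ℝ) ≤ 2) hs.le]
      rw [div_mul_eq_mul_div, mul_assoc, ← Real.rpow_add hs,
        (show -e + (a - β + 1/2) = -(2:ℝ)*β by rw [he_def]; ring)]
      ring
    calc ∫⁻ t in Ioi (0:ℝ), k t s
        = ∫⁻ t in Ioi (0:ℝ), (Ici (2*s)).indicator
            (fun t' => ENNReal.ofReal (t' ^ (-(e+1)))) t * ψ s :=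
          lintegral_congr fun t => by rw [hks t]
      _ = (∫⁻ t in Ioi (0:ℝ), (Ici (2*s)).indicator
            (fun t' => ENNReal.ofReal (t' ^ (-(e+1)))) t) * ψ s :=
          lintegral_mul_const' _ _ (hψfin s)
      _ = (∫⁻ t in Ici (2*s), ENNReal.ofReal (t ^ (-(e+1)))) * ψ s := by
          rw [lintegral_indicator measurableSet_Ici,
            Measure.restrict_restrict measurableSet_Ici,
            inter_eq_left.mpr (fun x hx => by rw [mem_Ici] at hx; rw [mem_Ioi]; linarith)]
      _ = (∫⁻ t in Ioi (2*s), ENNReal.ofReal (t ^ (-(e+1)))) * ψ s := by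
          rw [setLIntegral_congr Ioi_ae_eq_Ici]
      _ = ENNReal.ofReal ((2*s) ^ (-(e+1) + 1) / (-(-(e+1) + 1))) * ψ s := by
          rw [lint_Ioi_rpow (by linarith) (by linarith)]
      _ = ENNReal.ofReal ((2:ℝ)^(-e)/e) * (ENNReal.ofReal (s ^ (-(2:ℝ)*β)) * g s ^ 2) := by
          simp only [hψdef]
          rw [← mul_assoc, ← ENNReal.ofReal_mul (by
            apply div_nonneg
            · apply Real.rpow_nonneg; linarith
            · linarith), hval,
            ENNReal.ofReal_mul h2e.le, mul_assoc]
  have swap : ∫⁻ t in Ioi (0:ℝ), ∫⁻ s in Ioi (0:ℝ), k t s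
      = ∫⁻ s in Ioi (0:ℝ), ∫⁻ t in Ioi (0:ℝ), k t s :=
    lintegral_lintegral_swap hk_meas.aemeasurable
  have HJ : ∫⁻ t in Ioi (0:ℝ), ENNReal.ofReal (t ^ (-(e+1))) * ∫⁻ s in Ioc 0 (t/2), ψ s
      = ENNReal.ofReal ((2:ℝ)^(-e)/e) *
        ∫⁻ s in Ioi (0:ℝ), ENNReal.ofReal (s ^ (-(2:ℝ)*β)) * g s ^ 2 := by
    calc ∫⁻ t in Ioi (0:ℝ), ENNReal.ofReal (t ^ (-(e+1))) * ∫⁻ s in Ioc 0 (t/2), ψ s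
        = ∫⁻ t in Ioi (0:ℝ), ∫⁻ s in Ioi (0:ℝ), k t s := lintegral_congr fun t => step1 t
      _ = ∫⁻ s in Ioi (0:ℝ), ∫⁻ t in Ioi (0:ℝ), k t s := swap
      _ = ∫⁻ s in Ioi (0:ℝ), ENNReal.ofReal ((2:ℝ)^(-e)/e)
            * (ENNReal.ofReal (s ^ (-(2:ℝ)*β)) * g s ^ 2) :=
          lintegral_congr_ae (ae_restrict_of_forall_mem measurableSet_Ioi
            fun s hs => step2 s hs)
      _ = _ := lintegral_const_mul' _ _ ENNReal.ofReal_ne_top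
  -- main estimate for N
  have Hmain : ∫⁻ t in Ioi (0:ℝ), ENNReal.ofReal (t ^ (-(2:ℝ)*(β+κ))) * N t ^ 2
      ≤ ((C₂ * ((2:ℝ)^(-e) / e)).toNNReal : ℝ≥0∞)
        * ∫⁻ t in Ioi (0:ℝ), ENNReal.ofReal (t ^ (-(2:ℝ)*β)) * (‖f t‖₊ : ℝ≥0∞) ^ 2 := by
    rw [← hRHS]
    calc ∫⁻ t in Ioi (0:ℝ), ENNReal.ofReal (t ^ (-(2:ℝ)*(β+κ))) * N t ^ 2
        ≤ ENNReal.ofReal C₂ *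
          ∫⁻ t in Ioi (0:ℝ), ENNReal.ofReal (t ^ (-(e+1))) * ∫⁻ s in Ioc 0 (t/2), ψ s := Htot
      _ = ENNReal.ofReal C₂ * (ENNReal.ofReal ((2:ℝ)^(-e)/e) *
          ∫⁻ s in Ioi (0:ℝ), ENNReal.ofReal (s ^ (-(2:ℝ)*β)) * g s ^ 2) := by rw [HJ]
      _ = _ := by
          rw [← mul_assoc, ← ENNReal.ofReal_mul hC₂0]
          rfl
  -- measurability of N
  have hNmeas : Measurable N := by
    have hjoint : Measurable (({p : ℝ × ℝ | 0 < p.2 ∧ p.2 ≤ p.1/2}).indicator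
        (fun p : ℝ × ℝ => (‖u₀ p.1 p.2‖₊ : ℝ≥0∞))) :=
      hu₀.enorm.indicator hS
    have hmeas2 : Measurable fun t => ∫⁻ s,
        ({p : ℝ × ℝ | 0 < p.2 ∧ p.2 ≤ p.1/2}).indicator
          (fun p : ℝ × ℝ => (‖u₀ p.1 p.2‖₊ : ℝ≥0∞)) (t, s) ∂volume :=
      Measurable.lintegral_prod_right' hjoint
    have : N = fun t => ∫⁻ s, ({p : ℝ × ℝ | 0 < p.2 ∧ p.2 ≤ p.1/2}).indicator
        (fun p : ℝ × ℝ => (‖u₀ p.1 p.2‖₊ : ℝ≥0∞)) (t, s) ∂volume := by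
      funext t
      have : ∀ s : ℝ, ({p : ℝ × ℝ | 0 < p.2 ∧ p.2 ≤ p.1/2}).indicator
          (fun p : ℝ × ℝ => (‖u₀ p.1 p.2‖₊ : ℝ≥0∞)) (t, s)
          = (Ioc 0 (t/2)).indicator (fun s' => (‖u₀ t s'‖₊ : ℝ≥0∞)) s := by
        intro s
        by_cases hp : s ∈ Ioc 0 (t/2)
        · rw [Set.indicator_of_mem hp, Set.indicator_of_mem (by exact hp)]
        · rw [Set.indicator_of_notMem hp, Set.indicator_of_notMem (by exact hp)]
      simp only [this]
      rw [lintegral_indicator measurableSet_Ioc]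
    rw [this]
    exact hmeas2
  -- finiteness and a.e. convergence
  have hfin2 : (∫⁻ t in Ioi (0:ℝ), ENNReal.ofReal (t ^ (-(2:ℝ)*(β+κ))) * N t ^ 2) ≠ ∞ :=
    ne_top_of_le_ne_top (ENNReal.mul_ne_top ENNReal.coe_ne_top hfin) Hmain
  have hae : ∀ᵐ t ∂(volume.restrict (Ioi (0:ℝ))),
      ENNReal.ofReal (t ^ (-(2:ℝ)*(β+κ))) * N t ^ 2 < ∞ :=
    ae_lt_top ((ENNReal.measurable_ofReal.comp
      (measurable_id.pow measurable_const)).mul (hNmeas.pow_const 2)) hfin2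
  have haeN : ∀ᵐ t ∂(volume.restrict (Ioi (0:ℝ))), N t < ∞ := by
    filter_upwards [hae, ae_restrict_mem measurableSet_Ioi] with t h1t h2t
    rw [mem_Ioi] at h2t
    by_contra hcon
    have hN : N t = ∞ := eq_top_iff.mpr (not_lt.mp hcon)
    rw [hN] at h1t
    have : ENNReal.ofReal (t ^ (-(2:ℝ)*(β+κ))) ≠ 0 := by
      rw [Ne, ENNReal.ofReal_eq_zero, not_le]
      exact Real.rpow_pos_of_pos h2t _
    rw [(show (⊤:ℝ≥0∞) ^ 2 = ⊤ by simp), ENNReal.mul_top this] at h1t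
    exact absurd h1t (lt_irrefl _)
  constructor
  · filter_upwards [haeN] with t hNt
    have hint0 : IntegrableOn (fun s => u₀ t s) (Ioc 0 (t/2)) volume :=
      ⟨(hu₀t t).aestronglyMeasurable, hNt⟩
    have hcong : (fun s => u₀ t s) =ᵐ[volume.restrict (Ioc 0 (t/2))]
        (fun s => (((s / t : ℝ) : ℂ) ^ z) • K t s (f s)) :=
      (hff₀' t).mono fun s hs => by dsimp only [hu₀def]; rw [hs]
    exact Integrable.congr hint0 hcong
  · refine le_trans ?_ Hmain
    refine lintegral_mono_ae (ae_restrict_of_forall_mem measurableSet_Ioi fun t ht => ?_)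
    refine mul_le_mul_right (pow_le_pow_left' ?_ 2) _
    have hcong : ∫ s in Ioc 0 (t/2), (((s / t : ℝ) : ℂ) ^ z) • K t s (f s)
        = ∫ s in Ioc 0 (t/2), u₀ t s :=
      integral_congr_ae ((hff₀' t).mono fun s hs => by dsimp only [hu₀def]; rw [hs])
    rw [hcong]
    exact enorm_integral_le_lintegral_enorm _
end
end
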